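/- arXiv:1909.11996 — 8 statements merged into one kernel-verified Lean document; each statement's English description precedes it below -/
import Mathlib

section
/- The set {(x, y, z) ∈ ℝ³ : 0 ≤ x ≤ 1, 0 ≤ y ≤ 1, max(x + y − 1, 0) ≤ z ≤ min(x, y)} is equal to the convex hull of the four points (1,1,1), (1,0,0), (0,1,0), (0,0,0). -/
theorem frechet_tetrahedron :
    {p : Fin 3 → ℝ | 0 ≤ p 0 ∧ p 0 ≤ 1 ∧ 0 ≤ p 1 ∧ p 1 ≤ 1 ∧
      max (p 0 + p 1 - 1) 0 ≤ p 2 ∧ p 2 ≤ min (p 0) (p 1)} =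
    convexHull ℝ {![1,1,1], ![1,0,0], ![0,1,0], ![0,0,0]} := by
  apply le_antisymm
  · -- LHS ⊆ hull
    intro p hp
    obtain ⟨hx0, hx1, hy0, hy1, hzl, hzu⟩ := hp
    rw [max_le_iff] at hzl
    rw [le_min_iff] at hzu
    obtain ⟨hz1, hz0⟩ := hzl
    obtain ⟨hzx, hzy⟩ := hzu
    set x := p 0; set y := p 1; set z := p 2
    have key : (Finset.univ : Finset (Fin 4)).centerMass
        ![z, x - z, y - z, 1 - x - y + z] ![![1,1,1], ![1,0,0], ![0,1,0], ![0,0,0]]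
        ∈ convexHull ℝ ({![1,1,1], ![1,0,0], ![0,1,0], ![0,0,0]} : Set (Fin 3 → ℝ)) := by
      apply Finset.centerMass_mem_convexHull
      · intro i _
        fin_cases i <;> simp <;> linarith
      · simp [Fin.sum_univ_four]
        linarith
      · intro i _
        fin_cases i <;> simp
    convert key using 1
    rw [Finset.centerMass]
    have hsum : ∑ i : Fin 4, (![z, x - z, y - z, 1 - x - y + z]) i = 1 := by
      simp [Fin.sum_univ_four]; ring
    rw [hsum]
    funext j
    fin_cases j <;>
      simp [Fin.sum_univ_four, Matrix.cons_val_zero, Matrix.cons_val_one] <;> ring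
  · -- hull ⊆ LHS
    apply convexHull_min
    · intro q hq
      simp only [Set.mem_insert_iff, Set.mem_singleton_iff] at hq
      rcases hq with h | h | h | h <;> subst h <;>
        refine ⟨by norm_num, by norm_num, by norm_num, by norm_num, ?_, ?_⟩ <;>
        simp <;> norm_num
    · rintro p hp q hq a b ha hb hab
      obtain ⟨px0, px1, py0, py1, pzl, pzu⟩ := hp
      obtain ⟨qx0, qx1, qy0, qy1, qzl, qzu⟩ := hq
      rw [max_le_iff] at pzl qzl
      rw [le_min_iff] at pzu qzu
      refine ⟨?_, ?_, ?_, ?_, ?_, ?_⟩ <;>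
        simp only [Pi.add_apply, Pi.smul_apply, smul_eq_mul]
      · nlinarith [px0, qx0]
      · nlinarith [px1, qx1]
      · nlinarith [py0, qy0]
      · nlinarith [py1, qy1]
      · rw [max_le_iff]
        constructor <;> nlinarith [pzl.1, qzl.1, pzl.2, qzl.2]
      · rw [le_min_iff]
        constructor <;> nlinarith [pzu.1, qzu.1, pzu.2, qzu.2]
end

section
/- Let n ≥ 1 and let x : Finset (Fin n) → ℝ be a function with x(∅) = 1. For each T ⊆ Fin n, let χ_T : Finset (Fin n) → ℝ be defined by χ_T(S) = 1 if S ⊆ T and χ_T(S) = 0 otherwise. Then x lies in the convex hull of the set {χ_T : T ⊆ Fin n} (inside the space of functions Finset (Fin n) → ℝ) if and only if for every subset A ⊆ Fin n the alternating sum ∑_{B ⊆ Aᶜ} (−1)^{|B|} x(A ∪ B) is nonnegative. -/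
open Finset

namespace CoherenceAux

variable {n : ℕ}

lemma sum_neg_one_pow (C : Finset (Fin n)) :
    ∑ B ∈ C.powerset, (-1 : ℝ) ^ B.card = if C = ∅ then 1 else 0 := by
  have h := Finset.sum_powerset_neg_one_pow_card (x := C)
  apply_fun (fun z : ℤ => (z : ℝ)) at h
  push_cast at h
  split_ifs at h ⊢ <;> simpa using h

lemma L_chi (A T : Finset (Fin n)) :
    ∑ B ∈ Aᶜ.powerset, (-1 : ℝ) ^ B.card * (if A ∪ B ⊆ T then 1 else 0)
      = if T = A then 1 else 0 := by
  by_cases hAT : A ⊆ T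
  · have hc : ∀ B, (A ∪ B ⊆ T) ↔ (B ⊆ T) := by
      intro B; rw [Finset.union_subset_iff]; exact ⟨fun h => h.2, fun h => ⟨hAT, h⟩⟩
    have hkey : (Aᶜ ∩ T = ∅) ↔ (T = A) := by
      constructor
      · intro h
        refine le_antisymm (fun a haT => ?_) hAT
        by_contra haA
        have : a ∈ Aᶜ ∩ T := Finset.mem_inter.mpr ⟨Finset.mem_compl.mpr haA, haT⟩
        simp [h] at this
      · rintro rfl; ext a; simp
    calc ∑ B ∈ Aᶜ.powerset, (-1 : ℝ) ^ B.card * (if A ∪ B ⊆ T then 1 else 0)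
        = ∑ B ∈ Aᶜ.powerset, (if B ⊆ T then (-1 : ℝ) ^ B.card else 0) := by
          refine Finset.sum_congr rfl fun B _ => ?_
          simp [hc B, mul_ite]
      _ = ∑ B ∈ Aᶜ.powerset.filter (· ⊆ T), (-1 : ℝ) ^ B.card := by
          rw [Finset.sum_filter]
      _ = ∑ B ∈ (Aᶜ ∩ T).powerset, (-1 : ℝ) ^ B.card := by
          refine Finset.sum_congr ?_ fun _ _ => rfl
          ext B
          simp only [Finset.mem_filter, Finset.mem_powerset, Finset.subset_inter_iff]
      _ = if Aᶜ ∩ T = ∅ then 1 else 0 := sum_neg_one_pow _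
      _ = if T = A then 1 else 0 := by simp [hkey]
  · have h0 : ∀ B ∈ Aᶜ.powerset, (-1 : ℝ) ^ B.card * (if A ∪ B ⊆ T then 1 else 0) = 0 := by
      intro B _
      have : ¬ (A ∪ B ⊆ T) := fun h => hAT (Finset.union_subset_iff.mp h).1
      simp [this]
    rw [Finset.sum_congr rfl h0, Finset.sum_const_zero]
    have : T ≠ A := fun h => hAT (h ▸ le_rfl)
    simp [this]

lemma inner_sign (S U : Finset (Fin n)) :
    ∑ T ∈ U.powerset.filter (fun T => S ⊆ T), (-1 : ℝ) ^ (U \ T).card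
      = if U = S then 1 else 0 := by
  by_cases hSU : S ⊆ U
  · have h1 : ∑ T ∈ U.powerset.filter (fun T => S ⊆ T), (-1 : ℝ) ^ (U \ T).card
        = ∑ D ∈ (U \ S).powerset, (-1 : ℝ) ^ ((U \ S) \ D).card := by
      refine Finset.sum_nbij' (fun T => T \ S) (fun D => S ∪ D) ?_ ?_ ?_ ?_ ?_
      · intro T hT
        simp only [Finset.mem_filter, Finset.mem_powerset] at hT
        exact Finset.mem_powerset.mpr (Finset.sdiff_subset_sdiff hT.1 le_rfl)
      · intro D hD
        simp only [Finset.mem_powerset] at hD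
        simp only [Finset.mem_filter, Finset.mem_powerset]
        exact ⟨Finset.union_subset hSU (hD.trans Finset.sdiff_subset), Finset.subset_union_left⟩
      · intro T hT
        simp only [Finset.mem_filter, Finset.mem_powerset] at hT
        exact Finset.union_sdiff_of_subset hT.2
      · intro D hD
        simp only [Finset.mem_powerset] at hD
        show (S ∪ D) \ S = D
        rw [Finset.union_sdiff_cancel_left]
        exact Finset.disjoint_left.mpr fun a haS haD =>
          (Finset.mem_sdiff.mp (hD haD)).2 haS
      · intro T hT
        simp only [Finset.mem_filter, Finset.mem_powerset] at hT
        show (-1 : ℝ) ^ (U \ T).card = (-1 : ℝ) ^ ((U \ S) \ (T \ S)).card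
        congr 2
        ext a
        simp only [Finset.mem_sdiff]
        constructor
        · rintro ⟨haU, haT⟩
          exact ⟨⟨haU, fun haS => haT (hT.2 haS)⟩, fun hmem => absurd hmem.1 haT⟩
        · rintro ⟨⟨haU, haS⟩, hna⟩
          exact ⟨haU, fun haT => hna ⟨haT, haS⟩⟩
    have h2 : ∑ D ∈ (U \ S).powerset, (-1 : ℝ) ^ ((U \ S) \ D).card
        = ∑ E ∈ (U \ S).powerset, (-1 : ℝ) ^ E.card := by
      refine Finset.sum_nbij' (fun D => (U \ S) \ D) (fun E => (U \ S) \ E) ?_ ?_ ?_ ?_ ?_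
      · intro D _; exact Finset.mem_powerset.mpr Finset.sdiff_subset
      · intro E _; exact Finset.mem_powerset.mpr Finset.sdiff_subset
      · intro D hD
        simp only [Finset.mem_powerset] at hD
        show (U \ S) \ ((U \ S) \ D) = D
        rw [Finset.sdiff_sdiff_self_left, Finset.inter_eq_right.mpr hD]
      · intro E hE
        simp only [Finset.mem_powerset] at hE
        show (U \ S) \ ((U \ S) \ E) = E
        rw [Finset.sdiff_sdiff_self_left, Finset.inter_eq_right.mpr hE]
      · intro D _; rfl
    rw [h1, h2, sum_neg_one_pow]
    have : (U \ S = ∅) ↔ (U = S) := by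
      rw [Finset.sdiff_eq_empty_iff_subset]
      exact ⟨fun h => le_antisymm h hSU, fun h => h.le⟩
    simp [this]
  · have hempty : U.powerset.filter (fun T => S ⊆ T) = ∅ := by
      rw [Finset.filter_eq_empty_iff]
      intro T hT hST
      exact hSU (hST.trans (Finset.mem_powerset.mp hT))
    rw [hempty, Finset.sum_empty]
    have : U ≠ S := fun h => hSU (h ▸ le_rfl)
    simp [this]

lemma inversion (x : Finset (Fin n) → ℝ) (S : Finset (Fin n)) :
    ∑ T : Finset (Fin n),
      (∑ B ∈ Tᶜ.powerset, (-1 : ℝ) ^ B.card * x (T ∪ B)) * (if S ⊆ T then 1 else 0)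
      = x S := by
  classical
  have step1 : ∑ T : Finset (Fin n),
      (∑ B ∈ Tᶜ.powerset, (-1 : ℝ) ^ B.card * x (T ∪ B)) * (if S ⊆ T then 1 else 0)
      = ∑ T ∈ (Finset.univ : Finset (Finset (Fin n))).filter (fun T => S ⊆ T),
          ∑ B ∈ Tᶜ.powerset, (-1 : ℝ) ^ B.card * x (T ∪ B) := by
    rw [Finset.sum_filter]
    refine Finset.sum_congr rfl fun T _ => ?_
    split_ifs <;> simp
  rw [step1]
  have step2 : ∑ T ∈ (Finset.univ : Finset (Finset (Fin n))).filter (fun T => S ⊆ T),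
          ∑ B ∈ Tᶜ.powerset, (-1 : ℝ) ^ B.card * x (T ∪ B)
      = ∑ U : Finset (Fin n),
          ∑ T ∈ U.powerset.filter (fun T => S ⊆ T), (-1 : ℝ) ^ (U \ T).card * x U := by
    rw [Finset.sum_sigma', Finset.sum_sigma']
    refine Finset.sum_nbij' (fun p => ⟨p.1 ∪ p.2, p.1⟩) (fun q => ⟨q.2, q.1 \ q.2⟩) ?_ ?_ ?_ ?_ ?_
    · rintro ⟨T, B⟩ hp
      simp only [Finset.mem_sigma, Finset.mem_filter, Finset.mem_powerset,
        Finset.mem_univ, true_and] at hp ⊢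
      exact ⟨Finset.subset_union_left, hp.1⟩
    · rintro ⟨U, T⟩ hq
      simp only [Finset.mem_sigma, Finset.mem_filter, Finset.mem_powerset,
        Finset.mem_univ, true_and] at hq ⊢
      refine ⟨hq.2, fun a ha => ?_⟩
      exact Finset.mem_compl.mpr (Finset.mem_sdiff.mp ha).2
    · rintro ⟨T, B⟩ hp
      simp only [Finset.mem_sigma, Finset.mem_filter, Finset.mem_powerset,
        Finset.mem_univ, true_and] at hp
      have hdisj : Disjoint T B := Finset.disjoint_left.mpr fun a haT haB =>
        Finset.mem_compl.mp (hp.2 haB) haT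
      have : (T ∪ B) \ T = B := Finset.union_sdiff_cancel_left hdisj
      simp only [Sigma.mk.inj_iff]
      exact ⟨trivial, heq_of_eq this⟩
    · rintro ⟨U, T⟩ hq
      simp only [Finset.mem_sigma, Finset.mem_filter, Finset.mem_powerset,
        Finset.mem_univ, true_and] at hq
      have : T ∪ U \ T = U := Finset.union_sdiff_of_subset hq.1
      simp only [Sigma.mk.inj_iff]
      exact ⟨this, HEq.rfl⟩
    · rintro ⟨T, B⟩ hp
      simp only [Finset.mem_sigma, Finset.mem_filter, Finset.mem_powerset,
        Finset.mem_univ, true_and] at hp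
      have hdisj : Disjoint T B := Finset.disjoint_left.mpr fun a haT haB =>
        Finset.mem_compl.mp (hp.2 haB) haT
      show (-1 : ℝ) ^ B.card * x (T ∪ B) = (-1 : ℝ) ^ ((T ∪ B) \ T).card * x (T ∪ B)
      rw [Finset.union_sdiff_cancel_left hdisj]
  rw [step2]
  have step3 : ∀ U : Finset (Fin n),
      ∑ T ∈ U.powerset.filter (fun T => S ⊆ T), (-1 : ℝ) ^ (U \ T).card * x U
      = (if U = S then 1 else 0) * x U := by
    intro U
    rw [← Finset.sum_mul, inner_sign]
  rw [Finset.sum_congr rfl fun U _ => step3 U]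
  simp [Finset.sum_ite_eq']

end CoherenceAux

theorem coherence_characterization (n : ℕ) (hn : 1 ≤ n)
    (x : Finset (Fin n) → ℝ) (hx : x ∅ = 1) :
    x ∈ convexHull ℝ {f : Finset (Fin n) → ℝ |
        ∃ T : Finset (Fin n), f = fun S => if S ⊆ T then 1 else 0} ↔
      ∀ A : Finset (Fin n),
        0 ≤ ∑ B ∈ Aᶜ.powerset, (-1 : ℝ) ^ B.card * x (A ∪ B) := by
  classical
  constructor
  · intro hmem A
    have hlin : IsLinearMap ℝ (fun f : Finset (Fin n) → ℝ =>
        ∑ B ∈ Aᶜ.powerset, (-1 : ℝ) ^ B.card * f (A ∪ B)) := by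
      constructor
      · intro f g; simp [mul_add, Finset.sum_add_distrib]
      · intro c f
        simp only [Pi.smul_apply, smul_eq_mul, Finset.mul_sum]
        exact Finset.sum_congr rfl fun B _ => by ring
    have hconv : Convex ℝ {f : Finset (Fin n) → ℝ |
        (0 : ℝ) ≤ ∑ B ∈ Aᶜ.powerset, (-1 : ℝ) ^ B.card * f (A ∪ B)} :=
      convex_halfSpace_ge hlin 0
    have hsub : {f : Finset (Fin n) → ℝ |
        ∃ T : Finset (Fin n), f = fun S => if S ⊆ T then 1 else 0} ⊆
        {f : Finset (Fin n) → ℝ |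
        (0 : ℝ) ≤ ∑ B ∈ Aᶜ.powerset, (-1 : ℝ) ^ B.card * f (A ∪ B)} := by
      rintro f ⟨T, rfl⟩
      simp only [Set.mem_setOf_eq]
      rw [CoherenceAux.L_chi]
      split_ifs <;> norm_num
    exact convexHull_min hsub hconv hmem
  · intro h
    set w : Finset (Fin n) → ℝ := fun T =>
      ∑ B ∈ Tᶜ.powerset, (-1 : ℝ) ^ B.card * x (T ∪ B) with hw_def
    have hw : ∀ T, 0 ≤ w T := h
    have hsum : ∑ T : Finset (Fin n), w T = 1 := by
      have h0 := CoherenceAux.inversion x ∅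
      simpa [hx] using h0
    set z : Finset (Fin n) → (Finset (Fin n) → ℝ) :=
      fun T S => if S ⊆ T then 1 else 0 with hz_def
    have hxeq : x = ∑ T : Finset (Fin n), w T • z T := by
      funext S
      rw [Finset.sum_apply]
      simp only [Pi.smul_apply, smul_eq_mul, hz_def]
      exact (CoherenceAux.inversion x S).symm
    have hmem := Finset.centerMass_mem_convexHull (Finset.univ : Finset (Finset (Fin n)))
      (w := w) (z := z)
      (s := {f : Finset (Fin n) → ℝ | ∃ T : Finset (Fin n), f = fun S => if S ⊆ T then 1 else 0}) (fun T _ => hw T) (by rw [hsum]; norm_num) (fun T _ => ⟨T, rfl⟩)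
    rwa [Finset.centerMass_eq_of_sum_1 _ _ hsum, ← hxeq] at hmem
end

section
/- Let n ≥ 1 and let x : Finset (Fin n) → ℝ with x(∅) = 1 lie in the convex hull of the points χ_T (T ⊆ Fin n), where χ_T(S) = 1 if S ⊆ T and 0 otherwise. Then for any two disjoint nonempty subsets S', S'' of Fin n, max(x(S') + x(S'') − 1, 0) ≤ x(S' ∪ S'') ≤ min(x(S'), x(S'')). -/
theorem frechet_disjoint_subfamilies (n : ℕ) (hn : 1 ≤ n)
    (x : Finset (Fin n) → ℝ) (hx : x ∅ = 1)
    (hmem : x ∈ convexHull ℝ {f : Finset (Fin n) → ℝ |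
        ∃ T : Finset (Fin n), f = fun S => if S ⊆ T then 1 else 0})
    (S' S'' : Finset (Fin n)) (hS' : S'.Nonempty) (hS'' : S''.Nonempty)
    (hdisj : Disjoint S' S'') :
    max (x S' + x S'' - 1) 0 ≤ x (S' ∪ S'') ∧ x (S' ∪ S'') ≤ min (x S') (x S'') := by
  have key : x ∈ {f : Finset (Fin n) → ℝ |
      f S' + f S'' - 1 ≤ f (S' ∪ S'') ∧ 0 ≤ f (S' ∪ S'') ∧
      f (S' ∪ S'') ≤ f S' ∧ f (S' ∪ S'') ≤ f S''} := by
    refine convexHull_min ?_ ?_ hmem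
    · rintro f ⟨T, rfl⟩
      simp only [Set.mem_setOf_eq, Finset.union_subset_iff]
      by_cases h1 : S' ⊆ T <;> by_cases h2 : S'' ⊆ T <;> simp [h1, h2]
    · intro f hf g hg a b ha hb hab
      simp only [Set.mem_setOf_eq, Pi.add_apply, Pi.smul_apply, smul_eq_mul] at *
      obtain ⟨hf1, hf2, hf3, hf4⟩ := hf
      obtain ⟨hg1, hg2, hg3, hg4⟩ := hg
      refine ⟨by nlinarith, by nlinarith, by nlinarith, by nlinarith⟩
  obtain ⟨h1, h2, h3, h4⟩ := key
  exact ⟨max_le (by linarith) h2, le_min h3 h4⟩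
end

section
/- Let n ≥ 1 and let x : Finset (Fin n) → ℝ with x(∅) = 1 lie in the convex hull of the points χ_T (T ⊆ Fin n), where χ_T(S) = 1 if S ⊆ T and 0 otherwise. Then max(∑_{i} x({i}) − n + 1, 0) ≤ x(Fin n) ≤ min_i x({i}), where the sum and minimum range over all i ∈ Fin n. -/
theorem frechet_n_bounds (n : ℕ) (hn : 1 ≤ n)
    (x : Finset (Fin n) → ℝ) (hx : x ∅ = 1)
    (hmem : x ∈ convexHull ℝ {f : Finset (Fin n) → ℝ |
        ∃ T : Finset (Fin n), f = fun S => if S ⊆ T then 1 else 0}) :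
    max (∑ i : Fin n, x {i} - n + 1) 0 ≤ x Finset.univ ∧
      x Finset.univ ≤ (Finset.univ.inf' (Finset.univ_nonempty_iff.mpr
        (Fin.pos_iff_nonempty.mp hn)) fun i : Fin n => x {i}) := by
  set C : Set (Finset (Fin n) → ℝ) :=
    {f | (∑ i : Fin n, f {i} - n + 1 ≤ f Finset.univ) ∧ 0 ≤ f Finset.univ ∧
      ∀ i : Fin n, f Finset.univ ≤ f {i}} with hC
  have hconv : Convex ℝ C := by
    rintro f ⟨hf1, hf2, hf3⟩ g ⟨hg1, hg2, hg3⟩ a b ha hb hab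
    have he : ∀ S, (a • f + b • g) S = a * f S + b * g S := fun S => rfl
    refine ⟨?_, ?_, ?_⟩
    · simp only [he, Finset.sum_add_distrib, ← Finset.mul_sum]
      nlinarith [hf1, hg1]
    · rw [he]; positivity
    · intro i
      rw [he, he]
      have := hf3 i
      have := hg3 i
      nlinarith
  have hsub : {f : Finset (Fin n) → ℝ |
      ∃ T : Finset (Fin n), f = fun S => if S ⊆ T then 1 else 0} ⊆ C := by
    rintro f ⟨T, rfl⟩
    refine ⟨?_, ?_, ?_⟩
    · simp only
      have hsum : (∑ i : Fin n, if ({i} : Finset (Fin n)) ⊆ T then (1:ℝ) else 0)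
          = T.card := by
        rw [Finset.card_eq_sum_ones T, Nat.cast_sum]
        rw [← Finset.sum_filter]
        congr 1
        · ext i; simp [Finset.singleton_subset_iff]
        · simp
      rw [hsum]
      by_cases h : Finset.univ ⊆ T
      · have : T = Finset.univ := Finset.eq_univ_iff_forall.mpr (fun i => h (Finset.mem_univ i))
        simp [h, this]
      · simp only [if_neg h]
        have : T.card < n := by
          have : T ≠ Finset.univ := fun ht => h (ht ▸ le_refl _)
          have := Finset.card_lt_card (Finset.ssubset_univ_iff.mpr this)
          simpa using this
        have : (T.card : ℝ) ≤ (n : ℝ) - 1 := by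
          have : T.card + 1 ≤ n := this
          have := Nat.cast_le (α := ℝ).mpr this
          push_cast at this
          linarith
        linarith
    · simp only; positivity
    · intro i
      simp only
      by_cases h : Finset.univ ⊆ T
      · have : ({i} : Finset (Fin n)) ⊆ T := (Finset.subset_univ _).trans h
        simp [h, this]
      · simp only [if_neg h]
        positivity
  have hxC : x ∈ C := convexHull_min hsub hconv hmem
  obtain ⟨h1, h2, h3⟩ := hxC
  constructor
  · exact max_le h1 h2
  · exact Finset.le_inf' _ _ (fun i _ => h3 i)
end

section
/- Let (Ω, 𝓕, P) be a probability space and E₁, H₁, E₂, H₂ events with P(H₁) > 0 and P(H₂) > 0. Set x₁ = P(E₁∩H₁)/P(H₁), x₂ = P(E₂∩H₂)/P(H₂), define Y = 1_{E₁∩H₁∩E₂∩H₂} + x₁·1_{H₁ᶜ∩E₂∩H₂} + x₂·1_{H₂ᶜ∩E₁∩H₁}, and set x₁₂ = E[Y·1_{H₁∪H₂}]/P(H₁∪H₂). Then max(x₁ + x₂ − 1, 0) ≤ x₁₂ ≤ min(x₁, x₂). -/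
open MeasureTheory

set_option maxHeartbeats 1600000 in
theorem frechet_conjunction_probability_space
    {Ω : Type*} [MeasurableSpace Ω] (P : Measure Ω) [IsProbabilityMeasure P]
    (E₁ H₁ E₂ H₂ : Set Ω) (hE₁ : MeasurableSet E₁) (hH₁ : MeasurableSet H₁)
    (hE₂ : MeasurableSet E₂) (hH₂ : MeasurableSet H₂)
    (h₁pos : 0 < (P H₁).toReal) (h₂pos : 0 < (P H₂).toReal)
    (x₁ x₂ : ℝ)
    (hx₁ : x₁ = (P (E₁ ∩ H₁)).toReal / (P H₁).toReal)
    (hx₂ : x₂ = (P (E₂ ∩ H₂)).toReal / (P H₂).toReal)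
    (Y : Ω → ℝ)
    (hY : Y = fun ω => Set.indicator (E₁ ∩ H₁ ∩ E₂ ∩ H₂) (fun _ => (1:ℝ)) ω +
        x₁ * Set.indicator (H₁ᶜ ∩ E₂ ∩ H₂) (fun _ => (1:ℝ)) ω +
        x₂ * Set.indicator (H₂ᶜ ∩ E₁ ∩ H₁) (fun _ => (1:ℝ)) ω)
    (x₁₂ : ℝ)
    (hx₁₂ : x₁₂ = (∫ ω, Y ω * Set.indicator (H₁ ∪ H₂) (fun _ => (1:ℝ)) ω ∂P) /
        (P (H₁ ∪ H₂)).toReal) :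
    max (x₁ + x₂ - 1) 0 ≤ x₁₂ ∧ x₁₂ ≤ min x₁ x₂ := by
  classical
  set A : Set Ω := E₁ ∩ H₁ ∩ E₂ ∩ H₂ with hAdef
  set B : Set Ω := H₁ᶜ ∩ E₂ ∩ H₂ with hBdef
  set C : Set Ω := H₂ᶜ ∩ E₁ ∩ H₁ with hCdef
  have mA : MeasurableSet A := ((hE₁.inter hH₁).inter hE₂).inter hH₂
  have mB : MeasurableSet B := (hH₁.compl.inter hE₂).inter hH₂
  have mC : MeasurableSet C := (hH₂.compl.inter hE₁).inter hH₁
  -- pointwise identity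
  have hint : (fun ω => Y ω * Set.indicator (H₁ ∪ H₂) (fun _ => (1:ℝ)) ω)
      = fun ω => Set.indicator A (fun _ => (1:ℝ)) ω
        + x₁ * Set.indicator B (fun _ => (1:ℝ)) ω
        + x₂ * Set.indicator C (fun _ => (1:ℝ)) ω := by
    funext ω
    by_cases h : ω ∈ H₁ ∪ H₂
    · rw [Set.indicator_of_mem h, mul_one, hY]
    · have hA : ω ∉ A := fun hc => h (Or.inr hc.2)
      have hB : ω ∉ B := fun hc => h (Or.inr hc.2)
      have hC : ω ∉ C := fun hc => h (Or.inl hc.2)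
      rw [Set.indicator_of_notMem h, mul_zero, Set.indicator_of_notMem hA,
        Set.indicator_of_notMem hB, Set.indicator_of_notMem hC]
      ring
  have iA : Integrable (fun ω => Set.indicator A (fun _ => (1:ℝ)) ω) P :=
    (integrable_const (1:ℝ)).indicator mA
  have iB : Integrable (fun ω => Set.indicator B (fun _ => (1:ℝ)) ω) P :=
    (integrable_const (1:ℝ)).indicator mB
  have iC : Integrable (fun ω => Set.indicator C (fun _ => (1:ℝ)) ω) P :=
    (integrable_const (1:ℝ)).indicator mC
  have intA : (∫ ω, Set.indicator A (fun _ => (1:ℝ)) ω ∂P) = (P A).toReal := by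
    exact integral_indicator_one (μ := P) mA
  have intB : (∫ ω, Set.indicator B (fun _ => (1:ℝ)) ω ∂P) = (P B).toReal := by
    exact integral_indicator_one (μ := P) mB
  have intC : (∫ ω, Set.indicator C (fun _ => (1:ℝ)) ω ∂P) = (P C).toReal := by
    exact integral_indicator_one (μ := P) mC
  have hN : (∫ ω, Y ω * Set.indicator (H₁ ∪ H₂) (fun _ => (1:ℝ)) ω ∂P)
      = (P A).toReal + x₁ * (P B).toReal + x₂ * (P C).toReal := by
    have iAB : Integrable (fun ω => Set.indicator A (fun _ => (1:ℝ)) ω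
        + x₁ * Set.indicator B (fun _ => (1:ℝ)) ω) P := iA.add (iB.const_mul x₁)
    rw [hint]
    rw [integral_add iAB (iC.const_mul x₂), integral_add iA (iB.const_mul x₁),
      integral_const_mul, integral_const_mul, intA, intB, intC]
  -- notation for real measures
  set a := (P A).toReal with ha
  set b := (P B).toReal with hb
  set c := (P C).toReal with hc
  set d := (P (H₁ ∪ H₂)).toReal with hd
  set p₁ := (P H₁).toReal with hp₁
  set p₂ := (P H₂).toReal with hp₂
  set e₁ := (P (E₁ ∩ H₁)).toReal with he₁
  set e₂ := (P (E₂ ∩ H₂)).toReal with he₂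
  have ne_top : ∀ s : Set Ω, P s ≠ ⊤ := fun s => measure_ne_top P s
  have toReal_add_eq : ∀ s t : Set Ω, (P s + P t).toReal = (P s).toReal + (P t).toReal :=
    fun s t => ENNReal.toReal_add (ne_top s) (ne_top t)
  have mono : ∀ s t : Set Ω, s ⊆ t → (P s).toReal ≤ (P t).toReal := by
    intro s t hst
    exact ENNReal.toReal_le_toReal (ne_top s) (ne_top t) |>.mpr (measure_mono hst)
  -- basic nonnegativity / bounds
  have ha0 : 0 ≤ a := ENNReal.toReal_nonneg
  have hb0 : 0 ≤ b := ENNReal.toReal_nonneg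
  have hc0 : 0 ≤ c := ENNReal.toReal_nonneg
  have he₁p : e₁ ≤ p₁ := mono _ _ Set.inter_subset_right
  have he₂p : e₂ ≤ p₂ := mono _ _ Set.inter_subset_right
  have he₁0 : 0 ≤ e₁ := ENNReal.toReal_nonneg
  have he₂0 : 0 ≤ e₂ := ENNReal.toReal_nonneg
  have hx₁0 : 0 ≤ x₁ := by rw [hx₁]; exact div_nonneg he₁0 h₁pos.le
  have hx₂0 : 0 ≤ x₂ := by rw [hx₂]; exact div_nonneg he₂0 h₂pos.le
  have hx₁1 : x₁ ≤ 1 := by rw [hx₁]; exact (div_le_one h₁pos).mpr he₁p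
  have hx₂1 : x₂ ≤ 1 := by rw [hx₂]; exact (div_le_one h₂pos).mpr he₂p
  have hx₁e : x₁ * p₁ = e₁ := by rw [hx₁]; field_simp
  have hx₂e : x₂ * p₂ = e₂ := by rw [hx₂]; field_simp
  -- measure decompositions
  set q₁ := (P (H₁ᶜ ∩ H₂)).toReal with hq₁
  set q₂ := (P (H₂ᶜ ∩ H₁)).toReal with hq₂
  have hq₁0 : 0 ≤ q₁ := ENNReal.toReal_nonneg
  have hq₂0 : 0 ≤ q₂ := ENNReal.toReal_nonneg
  -- d = p₁ + q₁ and d = p₂ + q₂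
  have hd₁ : d = p₁ + q₁ := by
    have hu : H₁ ∪ (H₁ᶜ ∩ H₂) = H₁ ∪ H₂ := by ext ω; by_cases h : ω ∈ H₁ <;> simp [h]
    have hdisj : Disjoint H₁ (H₁ᶜ ∩ H₂) :=
      Set.disjoint_left.mpr fun ω h hc => hc.1 h
    rw [hd, ← hu, measure_union hdisj (hH₁.compl.inter hH₂), toReal_add_eq]
  have hd₂ : d = p₂ + q₂ := by
    have hu : H₂ ∪ (H₂ᶜ ∩ H₁) = H₁ ∪ H₂ := by ext ω; by_cases h : ω ∈ H₂ <;> simp [h] <;> tauto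
    have hdisj : Disjoint H₂ (H₂ᶜ ∩ H₁) :=
      Set.disjoint_left.mpr fun ω h hc => hc.1 h
    rw [hd, ← hu, measure_union hdisj (hH₂.compl.inter hH₁), toReal_add_eq]
  -- e₁ = m₁ + c where m₁ = P(E₁∩H₁∩H₂)
  set m₁ := (P (E₁ ∩ H₁ ∩ H₂)).toReal with hm₁
  set m₂ := (P (E₂ ∩ H₂ ∩ H₁)).toReal with hm₂
  have hCeq : C = (E₁ ∩ H₁) \ H₂ := by ext ω; simp [hCdef, Set.mem_diff]; tauto
  have hsplit₁ : m₁ + c = e₁ := by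
    rw [hm₁, hc, hCeq, he₁, ← toReal_add_eq]
    congr 1
    exact measure_inter_add_diff (E₁ ∩ H₁) hH₂
  have hBeq : B = (E₂ ∩ H₂) \ H₁ := by ext ω; simp [hBdef, Set.mem_diff]; tauto
  have hsplit₂ : m₂ + b = e₂ := by
    rw [hm₂, hb, hBeq, he₂, ← toReal_add_eq]
    congr 1
    exact measure_inter_add_diff (E₂ ∩ H₂) hH₁
  have ham₁ : a ≤ m₁ := mono _ _ (by intro ω hw; exact ⟨⟨hw.1.1.1, hw.1.1.2⟩, hw.2⟩)
  have ham₂ : a ≤ m₂ := mono _ _ (by intro ω hw; exact ⟨⟨hw.1.2, hw.2⟩, hw.1.1.2⟩)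
  have hbq₁ : b ≤ q₁ := mono _ _ (by intro ω hw; exact ⟨hw.1.1, hw.2⟩)
  have hcq₂ : c ≤ q₂ := mono _ _ (by intro ω hw; exact ⟨hw.1.1, hw.2⟩)
  -- inclusion-exclusion: e₁ + e₂ = u + a
  set u := (P ((E₁ ∩ H₁) ∪ (E₂ ∩ H₂))).toReal with hu
  have hie : u + a = e₁ + e₂ := by
    have : P ((E₁ ∩ H₁) ∪ (E₂ ∩ H₂)) + P ((E₁ ∩ H₁) ∩ (E₂ ∩ H₂))
        = P (E₁ ∩ H₁) + P (E₂ ∩ H₂) := measure_union_add_inter _ (hE₂.inter hH₂)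
    have hAeq : (E₁ ∩ H₁) ∩ (E₂ ∩ H₂) = A := by ext ω; simp [hAdef]; tauto
    rw [hu, ha, ← hAeq, he₁, he₂, ← toReal_add_eq, ← toReal_add_eq, this]
  -- r₁ = q₁ - b, r₂ = q₂ - c
  set r₁ := (P (H₁ᶜ ∩ E₂ᶜ ∩ H₂)).toReal with hr₁
  set r₂ := (P (H₂ᶜ ∩ E₁ᶜ ∩ H₁)).toReal with hr₂
  have hr₁0 : 0 ≤ r₁ := ENNReal.toReal_nonneg
  have hr₂0 : 0 ≤ r₂ := ENNReal.toReal_nonneg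
  have hq₁split : b + r₁ = q₁ := by
    have hBeq' : B = (H₁ᶜ ∩ H₂) ∩ E₂ := by ext ω; simp [hBdef]; tauto
    have hReq : H₁ᶜ ∩ E₂ᶜ ∩ H₂ = (H₁ᶜ ∩ H₂) \ E₂ := by
      ext ω; simp [Set.mem_diff]; tauto
    rw [hb, hr₁, hBeq', hReq, hq₁, ← toReal_add_eq]
    congr 1
    exact measure_inter_add_diff (H₁ᶜ ∩ H₂) hE₂
  have hq₂split : c + r₂ = q₂ := by
    have hCeq' : C = (H₂ᶜ ∩ H₁) ∩ E₁ := by ext ω; simp [hCdef]; tauto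
    have hReq : H₂ᶜ ∩ E₁ᶜ ∩ H₁ = (H₂ᶜ ∩ H₁) \ E₁ := by
      ext ω; simp [Set.mem_diff]; tauto
    rw [hc, hr₂, hCeq', hReq, hq₂, ← toReal_add_eq]
    congr 1
    exact measure_inter_add_diff (H₂ᶜ ∩ H₁) hE₁
  -- u + r₁ + r₂ ≤ d : three disjoint subsets of H₁ ∪ H₂
  have hd_ge : u + r₁ + r₂ ≤ d := by
    have m1 : MeasurableSet ((E₁ ∩ H₁) ∪ (E₂ ∩ H₂)) :=
      (hE₁.inter hH₁).union (hE₂.inter hH₂)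
    have m2 : MeasurableSet (H₁ᶜ ∩ E₂ᶜ ∩ H₂) := (hH₁.compl.inter hE₂.compl).inter hH₂
    have m3 : MeasurableSet (H₂ᶜ ∩ E₁ᶜ ∩ H₁) := (hH₂.compl.inter hE₁.compl).inter hH₁
    have d12 : Disjoint ((E₁ ∩ H₁) ∪ (E₂ ∩ H₂)) (H₁ᶜ ∩ E₂ᶜ ∩ H₂) := by
      rw [Set.disjoint_left]; rintro ω (h | h) hc
      · exact hc.1.1 h.2
      · exact hc.1.2 h.1
    have d13 : Disjoint ((E₁ ∩ H₁) ∪ (E₂ ∩ H₂)) (H₂ᶜ ∩ E₁ᶜ ∩ H₁) := by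
      rw [Set.disjoint_left]; rintro ω (h | h) hc
      · exact hc.1.2 h.1
      · exact hc.1.1 h.2
    have d23 : Disjoint (H₁ᶜ ∩ E₂ᶜ ∩ H₂) (H₂ᶜ ∩ E₁ᶜ ∩ H₁) := by
      rw [Set.disjoint_left]; rintro ω h hc
      exact hc.1.1 h.2
    have hE : P ((((E₁ ∩ H₁) ∪ (E₂ ∩ H₂)) ∪ (H₁ᶜ ∩ E₂ᶜ ∩ H₂)) ∪ (H₂ᶜ ∩ E₁ᶜ ∩ H₁))
        = P ((E₁ ∩ H₁) ∪ (E₂ ∩ H₂)) + P (H₁ᶜ ∩ E₂ᶜ ∩ H₂) + P (H₂ᶜ ∩ E₁ᶜ ∩ H₁) := by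
      rw [measure_union (Set.disjoint_union_left.mpr ⟨d13, d23⟩) m3, measure_union d12 m2]
    have heq : (P ((((E₁ ∩ H₁) ∪ (E₂ ∩ H₂)) ∪ (H₁ᶜ ∩ E₂ᶜ ∩ H₂)) ∪ (H₂ᶜ ∩ E₁ᶜ ∩ H₁))).toReal
        = u + r₁ + r₂ := by
      rw [hE, ENNReal.toReal_add (ENNReal.add_ne_top.mpr ⟨ne_top _, ne_top _⟩) (ne_top _),
        toReal_add_eq]
    have hsub2 : (((E₁ ∩ H₁) ∪ (E₂ ∩ H₂)) ∪ (H₁ᶜ ∩ E₂ᶜ ∩ H₂)) ∪ (H₂ᶜ ∩ E₁ᶜ ∩ H₁) ⊆ H₁ ∪ H₂ := by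
      intro ω hw
      rcases hw with (((h | h) | h) | h)
      · exact Or.inl h.2
      · exact Or.inr h.2
      · exact Or.inr h.2
      · exact Or.inl h.2
    have := mono _ _ hsub2
    rw [heq] at this
    exact this
  -- final arithmetic
  have hmul₁ : x₁ * d = e₁ + x₁ * b + x₁ * r₁ := by
    rw [hd₁, ← hq₁split]; linear_combination hx₁e
  have hmul₂ : x₂ * d = e₂ + x₂ * c + x₂ * r₂ := by
    rw [hd₂, ← hq₂split]; linear_combination hx₂e
  have hdpos : 0 < d := by rw [hd₁]; exact lt_add_of_lt_of_nonneg h₁pos hq₁0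
  have hxr₁ : x₁ * r₁ ≤ r₁ := mul_le_of_le_one_left hr₁0 hx₁1
  have hxr₂ : x₂ * r₂ ≤ r₂ := mul_le_of_le_one_left hr₂0 hx₂1
  have hxb : x₁ * b ≤ b := mul_le_of_le_one_left hb0 hx₁1
  have hxc : x₂ * c ≤ c := mul_le_of_le_one_left hc0 hx₂1
  have hxb0 : 0 ≤ x₁ * b := mul_nonneg hx₁0 hb0
  have hxc0 : 0 ≤ x₂ * c := mul_nonneg hx₂0 hc0
  have hxr₁0 : 0 ≤ x₁ * r₁ := mul_nonneg hx₁0 hr₁0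
  have hxr₂0 : 0 ≤ x₂ * r₂ := mul_nonneg hx₂0 hr₂0
  have expand : (x₁ + x₂ - 1) * d = x₁ * d + x₂ * d - d := by ring
  rw [hx₁₂, hN]
  constructor
  · apply max_le
    · rw [le_div_iff₀ hdpos]
      linarith only [expand, hmul₁, hmul₂, hie, hd_ge, hxr₁, hxr₂]
    · exact div_nonneg (by linarith only [ha0, hxb0, hxc0]) hdpos.le
  · apply le_min
    · rw [div_le_iff₀ hdpos]
      linarith only [hmul₁, ham₁, hsplit₁, hxc, hxr₁0]
    · rw [div_le_iff₀ hdpos]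
      linarith only [hmul₂, ham₂, hsplit₂, hxb, hxr₂0]
end

section
/- Let (Ω, 𝓕, P) be a probability space, and A, H, K events with H ∩ K = ∅, P(H) > 0, P(K) > 0. Set x = P(A∩H)/P(H) and y = P(A∩K)/P(K). Define Y = 1_{A∩H∩A∩K} + x·1_{Hᶜ∩A∩K} + y·1_{Kᶜ∩A∩H}. Then E[Y · 1_{H∪K}] = x·y·P(H ∪ K). -/
open MeasureTheory

theorem conjunction_disjoint_conditioning
    {Ω : Type*} [MeasurableSpace Ω] (P : Measure Ω) [IsProbabilityMeasure P]
    (A H K : Set Ω) (hA : MeasurableSet A) (hH : MeasurableSet H) (hK : MeasurableSet K)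
    (hHK : H ∩ K = ∅)
    (hHpos : 0 < (P H).toReal) (hKpos : 0 < (P K).toReal)
    (x y : ℝ)
    (hx : x = (P (A ∩ H)).toReal / (P H).toReal)
    (hy : y = (P (A ∩ K)).toReal / (P K).toReal)
    (Y : Ω → ℝ)
    (hY : Y = fun ω => Set.indicator (A ∩ H ∩ A ∩ K) (fun _ => (1:ℝ)) ω +
        x * Set.indicator (Hᶜ ∩ A ∩ K) (fun _ => (1:ℝ)) ω +
        y * Set.indicator (Kᶜ ∩ A ∩ H) (fun _ => (1:ℝ)) ω) :
    ∫ ω, Y ω * Set.indicator (H ∪ K) (fun _ => (1:ℝ)) ω ∂P = x * y * (P (H ∪ K)).toReal := by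
  have hKH : K ⊆ Hᶜ := by
    intro ω hω hω'
    exact absurd (Set.mem_inter hω' hω) (by simp [hHK])
  have hHKc : H ⊆ Kᶜ := by
    intro ω hω hω'
    exact absurd (Set.mem_inter hω hω') (by simp [hHK])
  have h1 : A ∩ H ∩ A ∩ K = ∅ := by
    apply Set.eq_empty_of_subset_empty
    rw [← hHK]
    intro ω ⟨⟨⟨_, h⟩, _⟩, k⟩
    exact ⟨h, k⟩
  have h2 : Hᶜ ∩ A ∩ K = A ∩ K := by
    ext ω; constructor
    · rintro ⟨⟨_, ha⟩, hk⟩; exact ⟨ha, hk⟩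
    · rintro ⟨ha, hk⟩; exact ⟨⟨hKH hk, ha⟩, hk⟩
  have h3 : Kᶜ ∩ A ∩ H = A ∩ H := by
    ext ω; constructor
    · rintro ⟨⟨_, ha⟩, hh⟩; exact ⟨ha, hh⟩
    · rintro ⟨ha, hh⟩; exact ⟨⟨hHKc hh, ha⟩, hh⟩
  have hfun : (fun ω => Y ω * Set.indicator (H ∪ K) (fun _ => (1:ℝ)) ω) =
      fun ω => x * Set.indicator (A ∩ K) (fun _ => (1:ℝ)) ω +
        y * Set.indicator (A ∩ H) (fun _ => (1:ℝ)) ω := by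
    funext ω
    rw [hY]
    simp only [h1, h2, h3, Set.indicator_empty, Pi.zero_apply, zero_add]
    by_cases hω : ω ∈ H ∪ K
    · simp [Set.indicator_of_mem hω]
    · have hk : ω ∉ A ∩ K := fun h => hω (Or.inr h.2)
      have hh : ω ∉ A ∩ H := fun h => hω (Or.inl h.2)
      simp [Set.indicator_of_notMem hω, Set.indicator_of_notMem hk,
        Set.indicator_of_notMem hh]
  rw [hfun]
  have hi1 : Integrable (fun ω => (A ∩ K).indicator (fun _ => (1:ℝ)) ω) P :=
    (integrable_const (1:ℝ)).indicator (hA.inter hK)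
  have hi2 : Integrable (fun ω => (A ∩ H).indicator (fun _ => (1:ℝ)) ω) P :=
    (integrable_const (1:ℝ)).indicator (hA.inter hH)
  rw [integral_add (hi1.const_mul x) (hi2.const_mul y),
    MeasureTheory.integral_const_mul, MeasureTheory.integral_const_mul]
  have e1 : ∫ ω, (A ∩ K).indicator (fun _ => (1:ℝ)) ω ∂P = (P (A ∩ K)).toReal := by
    rw [integral_indicator (hA.inter hK)]
    simp [Measure.real]
  have e2 : ∫ ω, (A ∩ H).indicator (fun _ => (1:ℝ)) ω ∂P = (P (A ∩ H)).toReal := by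
    rw [integral_indicator (hA.inter hH)]
    simp [Measure.real]
  rw [e1, e2]
  have hPAK : (P (A ∩ K)).toReal = y * (P K).toReal := by
    rw [hy]; field_simp
  have hPAH : (P (A ∩ H)).toReal = x * (P H).toReal := by
    rw [hx]; field_simp
  have hU : (P (H ∪ K)).toReal = (P H).toReal + (P K).toReal := by
    rw [measure_union (by rwa [Set.disjoint_iff_inter_eq_empty]) hK]
    exact ENNReal.toReal_add (measure_ne_top P H) (measure_ne_top P K)
  rw [hPAK, hPAH, hU]
  ring
end

section
/- For all real numbers x, y with 0 ≤ x ≤ 1, 0 ≤ y ≤ 1 and x·y < 1, one has min(x, y) ≤ (x + y − 2xy)/(1 − xy) ≤ 1. -/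
theorem quasi_conjunction_upper_bound (x y : ℝ)
    (hx0 : 0 ≤ x) (hx1 : x ≤ 1) (hy0 : 0 ≤ y) (hy1 : y ≤ 1) (hxy : x * y < 1) :
    min x y ≤ (x + y - 2 * x * y) / (1 - x * y) ∧ (x + y - 2 * x * y) / (1 - x * y) ≤ 1 := by
  have hd : 0 < 1 - x * y := by linarith
  constructor
  · rw [le_div_iff₀ hd]
    rcases le_total x y with h | h
    · rw [min_eq_left h]
      nlinarith [mul_nonneg hy0 (sq_nonneg (1 - x))]
    · rw [min_eq_right h]
      nlinarith [mul_nonneg hx0 (sq_nonneg (1 - y))]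
  · rw [div_le_one hd]
    nlinarith [mul_nonneg (sub_nonneg.2 hx1) (sub_nonneg.2 hy1)]
end

section
/- A point (x₁, x₂, x₃, x₁₂, x₁₃, x₂₃, x₁₂₃) ∈ ℝ⁷ lies in the convex hull of the eight points (1,1,1,1,1,1,1), (1,1,0,1,0,0,0), (1,0,1,0,1,0,0), (1,0,0,0,0,0,0), (0,1,1,0,0,1,0), (0,1,0,0,0,0,0), (0,0,1,0,0,0,0), (0,0,0,0,0,0,0) if and only if the eight inequalities x₁₂₃ ≥ 0, x₁₂ ≥ x₁₂₃, x₁₃ ≥ x₁₂₃, x₂₃ ≥ x₁₂₃, x₁ − x₁₂ − x₁₃ + x₁₂₃ ≥ 0, x₂ − x₁₂ − x₂₃ + x₁₂₃ ≥ 0, x₃ − x₁₃ − x₂₃ + x₁₂₃ ≥ 0, and 1 − x₁ − x₂ − x₃ + x₁₂ + x₁₃ + x₂₃ − x₁₂₃ ≥ 0 all hold. -/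
private lemma v7_0 {α : Type*} (a b c d e f g : α) : ![a,b,c,d,e,f,g] 0 = a := rfl
private lemma v7_1 {α : Type*} (a b c d e f g : α) : ![a,b,c,d,e,f,g] 1 = b := rfl
private lemma v7_2 {α : Type*} (a b c d e f g : α) : ![a,b,c,d,e,f,g] 2 = c := rfl
private lemma v7_3 {α : Type*} (a b c d e f g : α) : ![a,b,c,d,e,f,g] 3 = d := rfl
private lemma v7_4 {α : Type*} (a b c d e f g : α) : ![a,b,c,d,e,f,g] 4 = e := rfl
private lemma v7_5 {α : Type*} (a b c d e f g : α) : ![a,b,c,d,e,f,g] 5 = f := rfl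
private lemma v7_6 {α : Type*} (a b c d e f g : α) : ![a,b,c,d,e,f,g] 6 = g := rfl

private lemma v8_0 {α : Type*} (a b c d e f g k : α) : ![a,b,c,d,e,f,g,k] 0 = a := rfl
private lemma v8_1 {α : Type*} (a b c d e f g k : α) : ![a,b,c,d,e,f,g,k] 1 = b := rfl
private lemma v8_2 {α : Type*} (a b c d e f g k : α) : ![a,b,c,d,e,f,g,k] 2 = c := rfl
private lemma v8_3 {α : Type*} (a b c d e f g k : α) : ![a,b,c,d,e,f,g,k] 3 = d := rfl
private lemma v8_4 {α : Type*} (a b c d e f g k : α) : ![a,b,c,d,e,f,g,k] 4 = e := rfl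
private lemma v8_5 {α : Type*} (a b c d e f g k : α) : ![a,b,c,d,e,f,g,k] 5 = f := rfl
private lemma v8_6 {α : Type*} (a b c d e f g k : α) : ![a,b,c,d,e,f,g,k] 6 = g := rfl
private lemma v8_7 {α : Type*} (a b c d e f g k : α) : ![a,b,c,d,e,f,g,k] 7 = k := rfl

private lemma fm7_0 (h : 0 < 7) : (⟨0, h⟩ : Fin 7) = 0 := rfl
private lemma fm7_1 (h : 1 < 7) : (⟨1, h⟩ : Fin 7) = 1 := rfl
private lemma fm7_2 (h : 2 < 7) : (⟨2, h⟩ : Fin 7) = 2 := rfl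
private lemma fm7_3 (h : 3 < 7) : (⟨3, h⟩ : Fin 7) = 3 := rfl
private lemma fm7_4 (h : 4 < 7) : (⟨4, h⟩ : Fin 7) = 4 := rfl
private lemma fm7_5 (h : 5 < 7) : (⟨5, h⟩ : Fin 7) = 5 := rfl
private lemma fm7_6 (h : 6 < 7) : (⟨6, h⟩ : Fin 7) = 6 := rfl

private lemma fm8_0 (h : 0 < 8) : (⟨0, h⟩ : Fin 8) = 0 := rfl
private lemma fm8_1 (h : 1 < 8) : (⟨1, h⟩ : Fin 8) = 1 := rfl
private lemma fm8_2 (h : 2 < 8) : (⟨2, h⟩ : Fin 8) = 2 := rfl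
private lemma fm8_3 (h : 3 < 8) : (⟨3, h⟩ : Fin 8) = 3 := rfl
private lemma fm8_4 (h : 4 < 8) : (⟨4, h⟩ : Fin 8) = 4 := rfl
private lemma fm8_5 (h : 5 < 8) : (⟨5, h⟩ : Fin 8) = 5 := rfl
private lemma fm8_6 (h : 6 < 8) : (⟨6, h⟩ : Fin 8) = 6 := rfl
private lemma fm8_7 (h : 7 < 8) : (⟨7, h⟩ : Fin 8) = 7 := rfl

private lemma hull_dot_le (a : Fin 7 → ℝ) (c : ℝ) {s : Set (Fin 7 → ℝ)}
    (hs : ∀ y ∈ s, ∑ i, a i * y i ≤ c) {x : Fin 7 → ℝ}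
    (hx : x ∈ convexHull ℝ s) : ∑ i, a i * x i ≤ c := by
  have hlin : IsLinearMap ℝ (fun y : Fin 7 → ℝ => ∑ i, a i * y i) := by
    constructor
    · intro y z; simp [Pi.add_apply, mul_add, Finset.sum_add_distrib]
    · intro r y; simp [Pi.smul_apply, smul_eq_mul, Finset.mul_sum, mul_left_comm]
  exact convexHull_min hs (convex_halfSpace_le hlin c) hx

theorem mem_hull_three_events_iff (x₁ x₂ x₃ x₁₂ x₁₃ x₂₃ x₁₂₃ : ℝ) :
    ![x₁, x₂, x₃, x₁₂, x₁₃, x₂₃, x₁₂₃] ∈ convexHull ℝ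
      ({![1,1,1,1,1,1,1], ![1,1,0,1,0,0,0], ![1,0,1,0,1,0,0], ![1,0,0,0,0,0,0],
        ![0,1,1,0,0,1,0], ![0,1,0,0,0,0,0], ![0,0,1,0,0,0,0], ![0,0,0,0,0,0,0]} :
        Set (Fin 7 → ℝ)) ↔
      0 ≤ x₁₂₃ ∧ x₁₂₃ ≤ x₁₂ ∧ x₁₂₃ ≤ x₁₃ ∧ x₁₂₃ ≤ x₂₃ ∧
      0 ≤ x₁ - x₁₂ - x₁₃ + x₁₂₃ ∧ 0 ≤ x₂ - x₁₂ - x₂₃ + x₁₂₃ ∧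
      0 ≤ x₃ - x₁₃ - x₂₃ + x₁₂₃ ∧
      0 ≤ 1 - x₁ - x₂ - x₃ + x₁₂ + x₁₃ + x₂₃ - x₁₂₃ := by
  constructor
  · intro hx
    refine ⟨?_, ?_, ?_, ?_, ?_, ?_, ?_, ?_⟩
    · have := hull_dot_le ![0,0,0,0,0,0,-1] 0 (fun y hy => by
        rcases hy with h|h|h|h|h|h|h|h <;> subst h <;>
          simp only [Fin.sum_univ_seven, v7_0, v7_1, v7_2, v7_3, v7_4, v7_5, v7_6] <;> norm_num) hx
      simp only [Fin.sum_univ_seven, v7_0, v7_1, v7_2, v7_3, v7_4, v7_5, v7_6] at this; linarith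
    · have := hull_dot_le ![0,0,0,-1,0,0,1] 0 (fun y hy => by
        rcases hy with h|h|h|h|h|h|h|h <;> subst h <;>
          simp only [Fin.sum_univ_seven, v7_0, v7_1, v7_2, v7_3, v7_4, v7_5, v7_6] <;> norm_num) hx
      simp only [Fin.sum_univ_seven, v7_0, v7_1, v7_2, v7_3, v7_4, v7_5, v7_6] at this; linarith
    · have := hull_dot_le ![0,0,0,0,-1,0,1] 0 (fun y hy => by
        rcases hy with h|h|h|h|h|h|h|h <;> subst h <;>
          simp only [Fin.sum_univ_seven, v7_0, v7_1, v7_2, v7_3, v7_4, v7_5, v7_6] <;> norm_num) hx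
      simp only [Fin.sum_univ_seven, v7_0, v7_1, v7_2, v7_3, v7_4, v7_5, v7_6] at this; linarith
    · have := hull_dot_le ![0,0,0,0,0,-1,1] 0 (fun y hy => by
        rcases hy with h|h|h|h|h|h|h|h <;> subst h <;>
          simp only [Fin.sum_univ_seven, v7_0, v7_1, v7_2, v7_3, v7_4, v7_5, v7_6] <;> norm_num) hx
      simp only [Fin.sum_univ_seven, v7_0, v7_1, v7_2, v7_3, v7_4, v7_5, v7_6] at this; linarith
    · have := hull_dot_le ![-1,0,0,1,1,0,-1] 0 (fun y hy => by
        rcases hy with h|h|h|h|h|h|h|h <;> subst h <;>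
          simp only [Fin.sum_univ_seven, v7_0, v7_1, v7_2, v7_3, v7_4, v7_5, v7_6] <;> norm_num) hx
      simp only [Fin.sum_univ_seven, v7_0, v7_1, v7_2, v7_3, v7_4, v7_5, v7_6] at this; linarith
    · have := hull_dot_le ![0,-1,0,1,0,1,-1] 0 (fun y hy => by
        rcases hy with h|h|h|h|h|h|h|h <;> subst h <;>
          simp only [Fin.sum_univ_seven, v7_0, v7_1, v7_2, v7_3, v7_4, v7_5, v7_6] <;> norm_num) hx
      simp only [Fin.sum_univ_seven, v7_0, v7_1, v7_2, v7_3, v7_4, v7_5, v7_6] at this; linarith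
    · have := hull_dot_le ![0,0,-1,0,1,1,-1] 0 (fun y hy => by
        rcases hy with h|h|h|h|h|h|h|h <;> subst h <;>
          simp only [Fin.sum_univ_seven, v7_0, v7_1, v7_2, v7_3, v7_4, v7_5, v7_6] <;> norm_num) hx
      simp only [Fin.sum_univ_seven, v7_0, v7_1, v7_2, v7_3, v7_4, v7_5, v7_6] at this; linarith
    · have := hull_dot_le ![1,1,1,-1,-1,-1,1] 1 (fun y hy => by
        rcases hy with h|h|h|h|h|h|h|h <;> subst h <;>
          simp only [Fin.sum_univ_seven, v7_0, v7_1, v7_2, v7_3, v7_4, v7_5, v7_6] <;> norm_num) hx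
      simp only [Fin.sum_univ_seven, v7_0, v7_1, v7_2, v7_3, v7_4, v7_5, v7_6] at this; linarith
  · rintro ⟨h1, h2, h3, h4, h5, h6, h7, h8⟩
    set w : Fin 8 → ℝ := ![x₁₂₃, x₁₂ - x₁₂₃, x₁₃ - x₁₂₃, x₁ - x₁₂ - x₁₃ + x₁₂₃,
      x₂₃ - x₁₂₃, x₂ - x₁₂ - x₂₃ + x₁₂₃, x₃ - x₁₃ - x₂₃ + x₁₂₃,
      1 - x₁ - x₂ - x₃ + x₁₂ + x₁₃ + x₂₃ - x₁₂₃] with hw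
    set z : Fin 8 → (Fin 7 → ℝ) := ![![1,1,1,1,1,1,1], ![1,1,0,1,0,0,0],
      ![1,0,1,0,1,0,0], ![1,0,0,0,0,0,0], ![0,1,1,0,0,1,0], ![0,1,0,0,0,0,0],
      ![0,0,1,0,0,0,0], ![0,0,0,0,0,0,0]] with hz
    have hw0 : ∀ i ∈ Finset.univ, 0 ≤ w i := by
      intro i _
      fin_cases i <;>
        simp only [hw, fm8_0, fm8_1, fm8_2, fm8_3, fm8_4, fm8_5, fm8_6, fm8_7,
          v8_0, v8_1, v8_2, v8_3, v8_4, v8_5, v8_6, v8_7] <;> linarith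
    have hsum : ∑ i, w i = 1 := by
      simp only [hw, Fin.sum_univ_eight, v8_0, v8_1, v8_2, v8_3, v8_4, v8_5, v8_6, v8_7]
      ring
    have hmem : ∀ i ∈ Finset.univ, z i ∈
        ({![1,1,1,1,1,1,1], ![1,1,0,1,0,0,0], ![1,0,1,0,1,0,0], ![1,0,0,0,0,0,0],
        ![0,1,1,0,0,1,0], ![0,1,0,0,0,0,0], ![0,0,1,0,0,0,0], ![0,0,0,0,0,0,0]} :
        Set (Fin 7 → ℝ)) := by
      intro i _
      fin_cases i <;>
        simp only [hz, fm8_0, fm8_1, fm8_2, fm8_3, fm8_4, fm8_5, fm8_6, fm8_7,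
          v8_0, v8_1, v8_2, v8_3, v8_4, v8_5, v8_6, v8_7, Set.mem_insert_iff,
          Set.mem_singleton_iff] <;> tauto
    have hcm := Finset.centerMass_mem_convexHull Finset.univ hw0 (by rw [hsum]; norm_num) hmem
    have heq : Finset.univ.centerMass w z = ![x₁, x₂, x₃, x₁₂, x₁₃, x₂₃, x₁₂₃] := by
      rw [Finset.centerMass, hsum, inv_one, one_smul]
      funext j
      rw [Finset.sum_apply]
      fin_cases j <;>
        simp only [hw, hz, Fin.sum_univ_eight, Pi.smul_apply, smul_eq_mul,
          fm7_0, fm7_1, fm7_2, fm7_3, fm7_4, fm7_5, fm7_6,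
          v8_0, v8_1, v8_2, v8_3, v8_4, v8_5, v8_6, v8_7,
          v7_0, v7_1, v7_2, v7_3, v7_4, v7_5, v7_6] <;> ring
    rwa [heq] at hcm
end
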